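/- arXiv:2603.04197 — 6 statements merged into one kernel-verified Lean document; each statement's English description precedes it below -/
import Mathlib

section
/- Let U be a finitely presented group such that the abelianization of U is trivial and such that every finitely presented group embeds into U (i.e., for every finitely presented group P there is an injective group homomorphism P → U). Then there exist a subgroup A ≤ U and an element t ∈ U such that A is isomorphic to U and t⁻¹At is a proper subgroup of A (i.e., t⁻¹At ⊊ A). -/
/-!
`U ∗ ℤ` is finitely presented, so it embeds in `U`; restricting the embedding to `U` gives an
injective endomorphism `ψ` of `U` whose image misses the image of `ℤ`. The ascending HNN extension
`⟨U, s | s g s⁻¹ = ψ g⟩` is finitely presented too (finitely many of its relators suffice, as `U`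
is finitely generated), and `U` embeds in it by Britton's lemma. Embedding it in `U` by some `q`,
the subgroup `A = q(U)` and `t = q(s)⁻¹` satisfy `t⁻¹ A t = q(ψ(U)) ⊊ q(U) = A`.
-/

/-- A group is finitely presented if it is isomorphic to a presented group on finitely
many generators with finitely many relators. -/
def IsFinitelyPresented (G : Type*) [Group G] : Prop :=
  ∃ (n : ℕ) (rels : Set (FreeGroup (Fin n))),
    rels.Finite ∧ Nonempty (G ≃* PresentedGroup rels)

open Function Subgroup Monoid.Coprod

theorem isFinitelyPresented_iff {G : Type*} [Group G] :
    IsFinitelyPresented G ↔ Group.IsFinitelyPresented G := by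
  refine ⟨fun ⟨_, rels, hfin, ⟨e⟩⟩ => ?_,
    fun _ => Group.IsFinitelyPresented.exists_mulEquiv_presentedGroup⟩
  have : Finite rels := hfin.to_subtype
  exact .equiv e.symm

instance Group.IsFinitelyPresented.toFG {G : Type*} [Group G]
    [h : Group.IsFinitelyPresented G] : Group.FG G :=
  let ⟨_, _, hφ, _⟩ := h
  Group.fg_of_surjective hφ

section EqualizingQuotient

variable {G K : Type*} [Group G] [Group K]

theorem normalClosure_range_div_eq_image {S : Set G} (hS : closure S = ⊤) (f₁ f₂ : G →* K) :
    normalClosure (Set.range fun g => f₁ g / f₂ g) =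
      normalClosure ((fun g => f₁ g / f₂ g) '' S) := by
  set M := normalClosure ((fun g => f₁ g / f₂ g) '' S)
  have hM : (QuotientGroup.mk' M).comp f₁ = (QuotientGroup.mk' M).comp f₂ :=
    MonoidHom.eq_of_eqOn_dense hS fun g hg =>
      QuotientGroup.eq_iff_div_mem.mpr (subset_normalClosure ⟨g, hg, rfl⟩)
  refine le_antisymm (normalClosure_le_normal ?_)
    (normalClosure_mono (Set.image_subset_range _ _))
  rintro _ ⟨g, rfl⟩
  exact QuotientGroup.eq_iff_div_mem.mp (DFunLike.congr_fun hM g)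

theorem isFinitelyPresented_quotient_normalClosure_range_div [Group.IsFinitelyPresented K]
    [Group.FG G] (f₁ f₂ : G →* K) :
    Group.IsFinitelyPresented (K ⧸ normalClosure (Set.range fun g => f₁ g / f₂ g)) :=
  let ⟨S, hS⟩ := Group.FG.out (G := G)
  .quotient _ ⟨_, S.finite_toSet.image _, (normalClosure_range_div_eq_image hS f₁ f₂).symm⟩

end EqualizingQuotient

/-- The ascending HNN extension `⟨G, s | s g s⁻¹ = ψ g⟩`, with `s` the generator of `ℤ`. -/
abbrev AscendingHNN {G : Type*} [Group G] (ψ : G →* G) : Type _ :=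
  (G ∗ Multiplicative ℤ) ⧸ normalClosure (Set.range fun g : G =>
    MulAut.conj (inr (Multiplicative.ofAdd 1) : G ∗ Multiplicative ℤ) (inl g) /
      (inl (ψ g) : G ∗ Multiplicative ℤ))

namespace AscendingHNN

variable {G : Type*} [Group G] (ψ : G →* G)

def of : G →* AscendingHNN ψ := (QuotientGroup.mk' _).comp inl

def t : AscendingHNN ψ := QuotientGroup.mk (inr (Multiplicative.ofAdd 1) : G ∗ Multiplicative ℤ)

theorem t_mul_of_mul_inv (g : G) : t ψ * of ψ g * (t ψ)⁻¹ = of ψ (ψ g) :=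
  QuotientGroup.eq_iff_div_mem.mpr (subset_normalClosure ⟨g, rfl⟩)

instance [Group.IsFinitelyPresented G] : Group.IsFinitelyPresented (AscendingHNN ψ) := by
  have := isFinitelyPresented_quotient_normalClosure_range_div (K := G ∗ Multiplicative ℤ)
    ((MulAut.conj (inr (Multiplicative.ofAdd 1))).toMonoidHom.comp inl) (inl.comp ψ)
  exact this

/-- Britton's lemma, applied to Mathlib's `HNNExtension` of `G` along `G ≃* ψ.range`. -/
theorem of_injective (hψ : Injective ψ) : Injective (of ψ) := by
  let e : (⊤ : Subgroup G) ≃* ψ.range := Subgroup.topEquiv.trans (MonoidHom.ofInjective hψ)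
  let toHNN : AscendingHNN ψ →* HNNExtension G ⊤ ψ.range e :=
    QuotientGroup.lift _ (lift HNNExtension.of (zpowersHom _ HNNExtension.t)) <|
      normalClosure_le_normal <| by
        rintro _ ⟨g, rfl⟩
        rw [SetLike.mem_coe, MonoidHom.mem_ker, map_div, div_eq_one]
        exact (HNNExtension.equiv_eq_conj (φ := e) ⟨g, mem_top g⟩).symm
  have htoHNN : toHNN.comp (of ψ) = HNNExtension.of := by
    ext g
    exact lift_apply_inl HNNExtension.of (zpowersHom _ HNNExtension.t) g
  refine Injective.of_comp (f := toHNN) ?_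
  rw [← MonoidHom.coe_comp, htoHNN]
  exact HNNExtension.of_injective e

end AscendingHNN

theorem not_surjective_comp_inl {G H K : Type*} [Monoid G] [Monoid H] [Nontrivial H] [Monoid K]
    {p : G ∗ H →* K} (hp : Injective p) : ¬ Surjective (p.comp inl) := fun hs => by
  obtain ⟨h, hh⟩ := exists_ne (1 : H)
  obtain ⟨g, hg⟩ := hs (p (inr h))
  exact hh (by simpa using congrArg snd (hp hg).symm)

theorem map_conj_range_lt {G H : Type*} [Group G] [Group H] {ψ : G →* G} (hψ : ¬ Surjective ψ)
    {k : G →* H} (hk : Injective k) {s : H} (hs : ∀ g, s * k g * s⁻¹ = k (ψ g)) :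
    k.range.map (MulAut.conj s).toMonoidHom < k.range := by
  have hconj : (MulAut.conj s).toMonoidHom.comp k = k.comp ψ := MonoidHom.ext hs
  rw [MonoidHom.map_range, hconj, MonoidHom.range_comp, k.range_eq_map]
  exact (map_lt_map_iff_of_injective hk).mpr
    (lt_top_iff_ne_top.mpr (mt MonoidHom.range_eq_top.mp hψ))

theorem exists_subgroup_conjugate_proper_general (U : Type) [Group U]
    (hfp : IsFinitelyPresented U)
    (huniv : ∀ (P : Type) [Group P], IsFinitelyPresented P →
      ∃ f : P →* U, Function.Injective f) :
    ∃ (A : Subgroup U) (t : U),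
      Nonempty (A ≃* U) ∧
      Subgroup.map (MulAut.conj t⁻¹).toMonoidHom A < A := by
  have : Group.IsFinitelyPresented U := isFinitelyPresented_iff.mp hfp
  have embed (P : Type) [Group P] [Group.IsFinitelyPresented P] : ∃ f : P →* U, Injective f :=
    huniv P (isFinitelyPresented_iff.mpr ‹_›)
  obtain ⟨p, hp⟩ := embed (U ∗ Multiplicative ℤ)
  obtain ⟨q, hq⟩ := embed (AscendingHNN (p.comp inl))
  have hk : Injective (q.comp (AscendingHNN.of _)) :=
    hq.comp (AscendingHNN.of_injective _ (hp.comp inl_injective))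
  refine ⟨_, (q (AscendingHNN.t _))⁻¹, ⟨(MonoidHom.ofInjective hk).symm⟩, ?_⟩
  rw [inv_inv]
  refine map_conj_range_lt (not_surjective_comp_inl hp) hk fun g => ?_
  simp only [MonoidHom.comp_apply, ← map_inv, ← map_mul, AscendingHNN.t_mul_of_mul_inv]

/-- If `U` is a finitely presented group with trivial abelianization into which every
finitely presented group embeds, then `U` contains a subgroup `A ≅ U` and an element
`t` with `t⁻¹ A t ⊊ A`. -/
theorem exists_subgroup_conjugate_proper (U : Type) [Group U]
    (hfp : IsFinitelyPresented U)
    (htriv : Subsingleton (Abelianization U))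
    (huniv : ∀ (P : Type) [Group P], IsFinitelyPresented P →
      ∃ f : P →* U, Function.Injective f) :
    ∃ (A : Subgroup U) (t : U),
      Nonempty (A ≃* U) ∧
      Subgroup.map (MulAut.conj t⁻¹).toMonoidHom A < A :=
  exists_subgroup_conjugate_proper_general U hfp huniv
end

section
/- Let G = G₁ * G₂ be a free product of two nontrivial groups G₁ and G₂, and let N be a nontrivial, finitely generated normal subgroup of G. Then N has finite index in G. Consequently, a finitely generated group G that possesses a nontrivial finitely generated normal subgroup K with G/K infinite does not decompose as a free product of two nontrivial groups. -/
/-!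
Let `N = ⟨T⟩` with `T` finite, and let `S` be the union of the cosets `N k`, where `k` runs over
the prefixes of the normal forms of the elements of `T`. Join `g` to `g * m` whenever `m` lies in
a factor. Then `S` is connected: `N` acts on it, and each `t ∈ T` is joined to `1` through its
prefixes. Away from `1`, an edge never changes the factor of the first letter of the normal form.
Every nontrivial normal subgroup contains some `w` whose first and last letters lie in different
factors. If `g ∉ S`, then `g⁻¹ • S` is connected, avoids `1`, and contains `w ^ L * g⁻¹` and
`w⁻¹ ^ L * g⁻¹`; for large `L` these begin in different factors. Hence `S` is everything, and
`N` has finite index because `S` is a finite union of cosets.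
-/

namespace Subgroup

variable {G H : Type*} [Group G] [Group H]

lemma FG.map {K : Subgroup G} (hK : K.FG) (f : G →* H) : (K.map f).FG := by
  classical
  obtain ⟨T, rfl⟩ := hK
  exact ⟨T.image f, by rw [Finset.coe_image, MonoidHom.map_closure]⟩

lemma Normal.finiteIndex_of_mulEquiv {K : Subgroup G} (hKn : K.Normal) (e : G ≃* H)
    (hH : ∀ N : Subgroup H, N.Normal → N ≠ ⊥ → N.FG → N.FiniteIndex)
    (hK : K ≠ ⊥) (hKfg : K.FG) : K.FiniteIndex := by
  have := hH (K.map (e : G →* H)) (hKn.map _ e.surjective)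
    ((map_eq_bot_iff_of_injective _ e.injective).not.2 hK) (hKfg.map _)
  rw [finiteIndex_iff, ← index_map_equiv K e]
  exact finiteIndex_iff.1 this

end Subgroup

namespace Monoid.CoprodI

open Relation Pointwise

variable {ι : Type*} {M : ι → Type*} [∀ i, Group (M i)]

def ofList (l : List (Σ i, M i)) : CoprodI M := (l.map fun x => of x.2).prod

@[simp] lemma ofList_nil : ofList ([] : List (Σ i, M i)) = 1 := rfl

@[simp] lemma ofList_cons (a : Σ i, M i) (l : List (Σ i, M i)) :
    ofList (a :: l) = of a.2 * ofList l := List.prod_cons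

@[simp] lemma ofList_append (l₁ l₂ : List (Σ i, M i)) :
    ofList (l₁ ++ l₂) = ofList l₁ * ofList l₂ := by
  simp [ofList]

def IsReduced (l : List (Σ i, M i)) : Prop :=
  (∀ a ∈ l, a.2 ≠ 1) ∧ l.IsChain fun a b => a.1 ≠ b.1

@[simp] lemma isReduced_nil : IsReduced ([] : List (Σ i, M i)) := by
  simp [IsReduced]

@[simp] lemma isReduced_singleton {a : Σ i, M i} : IsReduced [a] ↔ a.2 ≠ 1 := by
  simp [IsReduced]

lemma isReduced_append {l₁ l₂ : List (Σ i, M i)} :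
    IsReduced (l₁ ++ l₂) ↔
      IsReduced l₁ ∧ IsReduced l₂ ∧ ∀ a ∈ l₁.getLast?, ∀ b ∈ l₂.head?, a.1 ≠ b.1 := by
  simp only [IsReduced, List.mem_append, List.isChain_append]
  grind

section Walks

def LetterStep (S : Set (CoprodI M)) (x y : CoprodI M) : Prop :=
  x ∈ S ∧ y ∈ S ∧ ∃ i, ∃ m : M i, x * of m = y

variable {S : Set (CoprodI M)} {x y : CoprodI M}

instance : Std.Symm (LetterStep S) where
  symm _ _ := fun ⟨hx, hy, i, m, h⟩ => ⟨hy, hx, i, m⁻¹, by simp [← h, mul_assoc]⟩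

lemma reflTransGen_letterStep_smul (k : CoprodI M) (h : ReflTransGen (LetterStep S) x y) :
    ReflTransGen (LetterStep (k • S)) (k * x) (k * y) :=
  h.lift (k * ·) fun _ _ ⟨ha, hb, i, m, hab⟩ =>
    ⟨Set.smul_mem_smul_set ha, Set.smul_mem_smul_set hb, i, m, by simp [← hab, mul_assoc]⟩

lemma reflTransGen_letterStep_mul_left {k : CoprodI M} (hk : k • S ⊆ S)
    (h : ReflTransGen (LetterStep S) x y) : ReflTransGen (LetterStep S) (k * x) (k * y) :=
  ReflTransGen.mono (fun _ _ ⟨ha, hb, hab⟩ => ⟨hk ha, hk hb, hab⟩) _ _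
    (reflTransGen_letterStep_smul k h)

lemma reflTransGen_letterStep_ofList (g : CoprodI M) (l : List (Σ i, M i))
    (h : ∀ q, q <+: l → g * ofList q ∈ S) : ReflTransGen (LetterStep S) g (g * ofList l) := by
  induction l using List.reverseRecOn with
  | nil => simpa using ReflTransGen.refl
  | append_singleton l a ih =>
    refine (ih fun q hq => h q (hq.trans (l.prefix_append _))).tail
      ⟨h l (l.prefix_append _), h _ List.prefix_rfl, a.1, a.2, by simp [mul_assoc]⟩

end Walks

section NormalForm

variable [DecidableEq ι] [∀ i, DecidableEq (M i)]

def nf (g : CoprodI M) : List (Σ i, M i) := (Word.equiv g).toList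

def fstIdx (g : CoprodI M) : Option ι := (nf g).head?.map Sigma.fst

lemma isReduced_nf (g : CoprodI M) : IsReduced (nf g) :=
  ⟨(Word.equiv g).ne_one, (Word.equiv g).chain_ne⟩

@[simp] lemma ofList_nf (g : CoprodI M) : ofList (nf g) = g :=
  Word.equiv.symm_apply_apply g

lemma nf_ofList {l : List (Σ i, M i)} (hl : IsReduced l) : nf (ofList l) = l :=
  congrArg Word.toList (Word.equiv.apply_symm_apply ⟨l, hl.1, hl.2⟩)

lemma nf_eq_nil_iff {g : CoprodI M} : nf g = [] ↔ g = 1 :=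
  ⟨fun h => by rw [← ofList_nf g, h, ofList_nil],
    fun h => by subst h; exact nf_ofList isReduced_nil⟩

@[simp] lemma nf_one : nf (1 : CoprodI M) = [] := nf_eq_nil_iff.2 rfl

lemma nf_of {i : ι} {m : M i} (hm : m ≠ 1) : nf (of m) = [⟨i, m⟩] := by
  simpa using nf_ofList (isReduced_singleton (a := ⟨i, m⟩) |>.2 hm)

/-- The last letter `a` of `g` cancels against `m`, absorbs it, or is followed by it. -/
lemma nf_mul_of {g : CoprodI M} (hg : g ≠ 1) {i : ι} (m : M i) :
    ∃ l a r, nf g = l ++ [a] ∧ nf (g * of m) = l ++ r ∧ r.length ≤ 2 ∧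
      ∀ b ∈ r.head?, b.1 = a.1 := by
  obtain ⟨l, ⟨j, x⟩, hla⟩ := (List.eq_nil_or_concat (nf g)).resolve_left (nf_eq_nil_iff.not.2 hg)
  rw [List.concat_eq_append] at hla
  have hred := isReduced_nf g
  rw [hla, isReduced_append] at hred
  obtain ⟨hl, hx, hlx⟩ := hred
  have hg' : g = ofList l * of x := by rw [← ofList_nf g, hla]; simp
  refine ⟨l, ⟨j, x⟩, ?_⟩
  by_cases hm : m = 1
  · exact ⟨[⟨j, x⟩], hla, by simp [hm, hla], by simp, by simp⟩
  by_cases hij : j = i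
  · subst hij
    by_cases hxm : x * m = 1
    · refine ⟨[], hla, ?_, by simp, by simp⟩
      rw [hg', mul_assoc, ← map_mul, hxm, map_one, mul_one, List.append_nil, nf_ofList hl]
    · refine ⟨[⟨j, x * m⟩], hla, ?_, by simp, by simp⟩
      rw [hg', mul_assoc, ← map_mul]
      simpa using nf_ofList (l := l ++ [⟨j, x * m⟩])
        (isReduced_append.2 ⟨hl, isReduced_singleton.2 hxm, by simpa using hlx⟩)
  · refine ⟨[⟨j, x⟩, ⟨i, m⟩], hla, ?_, by simp, by simp⟩
    have hred : IsReduced ((l ++ [⟨j, x⟩]) ++ [⟨i, m⟩]) :=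
      isReduced_append.2 ⟨isReduced_append.2 ⟨hl, hx, hlx⟩, isReduced_singleton.2 hm, by simpa⟩
    rw [hg', mul_assoc]
    simpa using nf_ofList hred

lemma length_nf_mul_of_le (g : CoprodI M) {i : ι} (m : M i) :
    (nf (g * of m)).length ≤ (nf g).length + 1 := by
  rcases eq_or_ne g 1 with rfl | hg
  · by_cases hm : m = 1 <;> simp [hm, nf_of]
  · obtain ⟨l, a, r, hg, hgm, hr, -⟩ := nf_mul_of hg m
    simp only [hg, hgm, List.length_append, List.length_singleton]
    omega

lemma length_nf_le_length_nf_mul_of (g : CoprodI M) {i : ι} (m : M i) :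
    (nf g).length ≤ (nf (g * of m)).length + 1 := by
  rcases eq_or_ne g 1 with rfl | hg
  · simp
  · obtain ⟨l, a, r, hg, hgm, -, -⟩ := nf_mul_of hg m
    simp only [hg, hgm, List.length_append, List.length_singleton]
    omega

lemma head?_nf_mul_of {g : CoprodI M} (hg : 2 ≤ (nf g).length) {i : ι} (m : M i) :
    (nf (g * of m)).head? = (nf g).head? := by
  have hg₁ : g ≠ 1 := by rintro rfl; simp at hg
  obtain ⟨l, a, r, hl, hgm, -, -⟩ := nf_mul_of hg₁ m
  have hl₀ : l ≠ [] := by rintro rfl; simp [hl] at hg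
  rw [hgm, hl, List.head?_append_of_ne_nil _ hl₀, List.head?_append_of_ne_nil _ hl₀]

lemma fstIdx_mul_of {g : CoprodI M} {i : ι} {m : M i} (hg : g ≠ 1) (hgm : g * of m ≠ 1) :
    fstIdx (g * of m) = fstIdx g := by
  obtain ⟨l, a, r, hl, hglm, -, hra⟩ := nf_mul_of hg m
  rcases l with _ | ⟨c, l⟩
  · rcases r with _ | ⟨b, r⟩
    · exact absurd (nf_eq_nil_iff.1 hglm) hgm
    · simp_all [fstIdx]
  · simp [fstIdx, hl, hglm]

lemma length_nf_ofList_le (l : List (Σ i, M i)) : (nf (ofList l)).length ≤ l.length := by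
  induction l using List.reverseRecOn with
  | nil => simp
  | append_singleton l a ih =>
    have := length_nf_mul_of_le (ofList l) a.2
    simp only [ofList_append, ofList_cons, ofList_nil, mul_one, List.length_append,
      List.length_singleton] at this ⊢
    omega

lemma head?_nf_mul {x y : CoprodI M} (h : (nf y).length + 2 ≤ (nf x).length) :
    (nf (x * y)).head? = (nf x).head? := by
  rw [← ofList_nf y]
  generalize nf y = l at h
  induction l generalizing x with
  | nil => simp
  | cons a l ih =>
    have hlen := length_nf_le_length_nf_mul_of x a.2
    simp only [List.length_cons] at h
    rw [ofList_cons, ← mul_assoc, ih (by omega), head?_nf_mul_of (by omega)]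

lemma nf_mul_eq_append {g h : CoprodI M}
    (hgh : ∀ a ∈ (nf g).getLast?, ∀ b ∈ (nf h).head?, a.1 ≠ b.1) :
    nf (g * h) = nf g ++ nf h := by
  conv_lhs => rw [← ofList_nf g, ← ofList_nf h, ← ofList_append]
  exact nf_ofList (isReduced_append.2 ⟨isReduced_nf g, isReduced_nf h, hgh⟩)

lemma nf_inv (g : CoprodI M) :
    nf g⁻¹ = (nf g).reverse.map fun a => ⟨a.1, a.2⁻¹⟩ := by
  have hred : IsReduced ((nf g).reverse.map fun a => (⟨a.1, a.2⁻¹⟩ : Σ i, M i)) := by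
    refine ⟨fun a ha => ?_, ?_⟩
    · obtain ⟨b, hb, rfl⟩ := List.mem_map.1 ha
      simpa using (isReduced_nf g).1 b (List.mem_reverse.1 hb)
    rw [List.isChain_map, List.isChain_reverse]
    exact (isReduced_nf g).2.imp fun _ _ h => Ne.symm h
  have hprod : ofList ((nf g).reverse.map fun a => (⟨a.1, a.2⁻¹⟩ : Σ i, M i)) = g⁻¹ := by
    conv_rhs => rw [← ofList_nf g]
    generalize nf g = l
    induction l with
    | nil => simp
    | cons a l ih => simp only [List.reverse_cons, List.map_append, ofList_append, ih]; simp
  rw [← hprod, nf_ofList hred]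

def EndsInDistinctFactors (g : CoprodI M) : Prop :=
  ∀ a ∈ (nf g).getLast?, ∀ b ∈ (nf g).head?, a.1 ≠ b.1

lemma EndsInDistinctFactors.nf_pow {w : CoprodI M} (hw : EndsInDistinctFactors w) (k : ℕ) :
    nf (w ^ k) = (List.replicate k (nf w)).flatten := by
  rcases eq_or_ne w 1 with rfl | hw1
  · simp
  have hw₀ : nf w ≠ [] := nf_eq_nil_iff.not.2 hw1
  induction k with
  | zero => simp
  | succ k ih =>
    rw [pow_succ', nf_mul_eq_append, ih, List.replicate_succ, List.flatten_cons]
    intro a ha b hb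
    rcases Nat.eq_zero_or_pos k with rfl | hk
    · simp at hb
    · rw [ih, List.head?_flatten_replicate hk.ne'] at hb
      exact hw a ha b hb

lemma EndsInDistinctFactors.fstIdx_pow_mul {w : CoprodI M} (hw : EndsInDistinctFactors w)
    (hw1 : w ≠ 1) (y : CoprodI M) : fstIdx (w ^ ((nf y).length + 2) * y) = fstIdx w := by
  have hw₀ : nf w ≠ [] := nf_eq_nil_iff.not.2 hw1
  have hlen : (nf y).length + 2 ≤ (nf (w ^ ((nf y).length + 2))).length := by
    simp only [hw.nf_pow, List.length_flatten, List.map_replicate, List.sum_replicate, smul_eq_mul]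
    exact Nat.le_mul_of_pos_right _ (List.length_pos_iff.2 hw₀)
  rw [fstIdx, head?_nf_mul hlen, hw.nf_pow, List.head?_flatten_replicate (by omega), fstIdx]

lemma EndsInDistinctFactors.inv {w : CoprodI M} (hw : EndsInDistinctFactors w) :
    EndsInDistinctFactors w⁻¹ := by
  intro a ha b hb
  rw [nf_inv, List.getLast?_map, List.getLast?_reverse] at ha
  rw [nf_inv, List.head?_map, List.head?_reverse] at hb
  obtain ⟨c, hc, rfl⟩ := Option.mem_map.1 ha
  obtain ⟨d, hd, rfl⟩ := Option.mem_map.1 hb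
  exact (hw d hd c hc).symm

lemma EndsInDistinctFactors.fstIdx_inv_ne {w : CoprodI M} (hw : EndsInDistinctFactors w)
    (hw1 : w ≠ 1) : fstIdx w⁻¹ ≠ fstIdx w := by
  have hw₀ : nf w ≠ [] := nf_eq_nil_iff.not.2 hw1
  rw [fstIdx, fstIdx, nf_inv, List.head?_map, List.head?_reverse,
    List.getLast?_eq_some_getLast hw₀, List.head?_eq_some_head hw₀]
  simpa using hw _ (List.getLast?_eq_some_getLast hw₀) _ (List.head?_eq_some_head hw₀)

section NormalSubgroup

variable {N : Subgroup (CoprodI M)} [N.Normal]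

lemma exists_mem_endsInDistinctFactors_of_length_nf_eq_one [Nontrivial ι]
    [∀ i, Nontrivial (M i)] {n : CoprodI M} (hnN : n ∈ N) (hn : (nf n).length = 1) :
    ∃ w ∈ N, w ≠ 1 ∧ EndsInDistinctFactors w := by
  obtain ⟨⟨i, x⟩, hx⟩ := List.length_eq_one_iff.1 hn
  have hx1 : x ≠ 1 := (isReduced_nf n).1 ⟨i, x⟩ (by simp [hx])
  have hxN : of x ∈ N := by
    rwa [← ofList_nf n, hx, ofList_cons, ofList_nil, mul_one] at hnN
  obtain ⟨j, hji⟩ := exists_ne i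
  obtain ⟨y, hy⟩ := exists_ne (1 : M j)
  let l : List (Σ i, M i) := [⟨j, y⟩, ⟨i, x⟩, ⟨j, y⁻¹⟩, ⟨i, x⟩]
  have hl : IsReduced l := by simp [l, IsReduced, hx1, hy, hji, hji.symm]
  have hw : ofList l = of y * of x * (of y)⁻¹ * of x := by simp [l, ofList, mul_assoc]
  refine ⟨ofList l, hw ▸ mul_mem (Subgroup.Normal.conj_mem ‹_› _ hxN _) hxN, ?_, ?_⟩
  · rw [Ne, ← nf_eq_nil_iff, nf_ofList hl]
    simp [l]
  · rw [EndsInDistinctFactors, nf_ofList hl]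
    simp [l, hji.symm]

/-- Conjugating by the first letter merges the first and last letters when they lie in the same
factor. -/
lemma exists_mem_length_nf_lt {n : CoprodI M} (hnN : n ∈ N) (hn : ¬EndsInDistinctFactors n)
    (hlen : 2 ≤ (nf n).length) : ∃ n' ∈ N, n' ≠ 1 ∧ (nf n').length < (nf n).length := by
  have hn1 : n ≠ 1 := by rintro rfl; simp at hlen
  obtain ⟨⟨j, x⟩, rest, hrest⟩ :=
    List.exists_cons_of_ne_nil (List.ne_nil_of_length_pos (by omega : 0 < (nf n).length))
  obtain ⟨mid, ⟨i, z⟩, rfl⟩ := (List.eq_nil_or_concat rest).resolve_left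
    (by rintro rfl; simp [hrest] at hlen)
  rw [List.concat_eq_append] at hrest
  have hij : i = j := by
    by_contra hij
    refine hn fun a ha b hb => ?_
    rw [hrest, List.getLast?_cons, List.getLast?_append] at ha
    rw [hrest, List.head?_cons] at hb
    simp only [List.getLast?_singleton, Option.some_or, Option.getD_some, Option.mem_def,
      Option.some.injEq] at ha hb
    subst ha hb
    exact hij
  subst hij
  have hconj : (of x)⁻¹ * n * of x = ofList (mid ++ [⟨i, z * x⟩]) := by
    rw [← ofList_nf n, hrest]
    simp [mul_assoc]
  refine ⟨(of x)⁻¹ * n * of x, ?_, ?_, ?_⟩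
  · simpa using Subgroup.Normal.conj_mem ‹_› n hnN (of x)⁻¹
  · simpa using (conj_eq_one_iff (a := (of x)⁻¹) (b := n)).not.2 hn1
  · rw [hconj, hrest]
    have := length_nf_ofList_le (mid ++ [⟨i, z * x⟩])
    simp only [List.length_append, List.length_cons] at this ⊢
    omega

lemma exists_mem_endsInDistinctFactors [Nontrivial ι] [∀ i, Nontrivial (M i)] (hN : N ≠ ⊥) :
    ∃ w ∈ N, w ≠ 1 ∧ EndsInDistinctFactors w := by
  obtain ⟨n, hnN, hn1⟩ := N.bot_or_exists_ne_one.resolve_left hN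
  induction hlen : (nf n).length using Nat.strong_induction_on generalizing n with
  | _ k ih =>
  by_cases hn : EndsInDistinctFactors n
  · exact ⟨n, hnN, hn1, hn⟩
  rcases lt_or_ge (nf n).length 2 with hlt | hle
  · have hpos := List.length_pos_iff.2 (nf_eq_nil_iff.not.2 hn1)
    exact exists_mem_endsInDistinctFactors_of_length_nf_eq_one hnN (by omega)
  · obtain ⟨n', hn'N, hn'1, hlt⟩ := exists_mem_length_nf_lt hnN hn hle
    exact ih _ (hlen ▸ hlt) n' hn'N hn'1 rfl

end NormalSubgroup

lemma fstIdx_eq_of_reflTransGen {S : Set (CoprodI M)} (h1 : 1 ∉ S) {x y : CoprodI M}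
    (h : ReflTransGen (LetterStep S) x y) : fstIdx x = fstIdx y := by
  induction h with
  | refl => rfl
  | tail _ hstep ih =>
    obtain ⟨hb, hc, i, m, rfl⟩ := hstep
    rw [ih, fstIdx_mul_of (ne_of_mem_of_not_mem hb h1) (ne_of_mem_of_not_mem hc h1)]

theorem eq_univ_of_forall_reflTransGen {N : Subgroup (CoprodI M)} [N.Normal] {S : Set (CoprodI M)}
    (hNS : (N : Set (CoprodI M)) ⊆ S) (hS : ∀ s ∈ S, ReflTransGen (LetterStep S) 1 s)
    {w : CoprodI M} (hwN : w ∈ N) (hw1 : w ≠ 1) (hw : EndsInDistinctFactors w) :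
    S = Set.univ := by
  refine Set.eq_univ_of_forall fun g => by_contra fun hg => ?_
  have h1 : (1 : CoprodI M) ∉ g⁻¹ • S := by
    rwa [Set.mem_smul_set_iff_inv_smul_mem, inv_inv, smul_eq_mul, mul_one]
  have key : ∀ v ∈ N, v ≠ 1 → EndsInDistinctFactors v → fstIdx v = fstIdx g⁻¹ := by
    intro v hvN hv1 hv
    have hwalk := reflTransGen_letterStep_smul g⁻¹
      (hS _ (hNS (Subgroup.Normal.conj_mem ‹_› _ (pow_mem hvN ((nf g⁻¹).length + 2)) g)))
    rw [mul_one, ← mul_assoc, ← mul_assoc, inv_mul_cancel, one_mul] at hwalk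
    rw [← hv.fstIdx_pow_mul hv1 g⁻¹, fstIdx_eq_of_reflTransGen h1 hwalk]
  exact hw.fstIdx_inv_ne hw1
    ((key _ (inv_mem hwN) (inv_ne_one.2 hw1) hw.inv).trans (key w hwN hw1 hw).symm)

section PrefixCosets

variable {N : Subgroup (CoprodI M)} {T : Set (CoprodI M)}

variable (N) in
def prefixCosets (T : Set (CoprodI M)) : Set (CoprodI M) :=
  {g | ∃ t ∈ T, ∃ q, q <+: nf t ∧ (g : CoprodI M ⧸ N) = ofList q}

lemma smul_prefixCosets_subset [N.Normal] {n : CoprodI M} (hn : n ∈ N) :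
    n • prefixCosets N T ⊆ prefixCosets N T := by
  rintro _ ⟨g, ⟨t, ht, q, hq, hg⟩, rfl⟩
  refine ⟨t, ht, q, hq, ?_⟩
  change ((n * g : CoprodI M) : CoprodI M ⧸ N) = ofList q
  rw [QuotientGroup.mk_mul, (QuotientGroup.eq_one_iff n).2 hn, one_mul, hg]

lemma coe_subset_prefixCosets [N.Normal] (hT : T.Nonempty) :
    (N : Set (CoprodI M)) ⊆ prefixCosets N T := fun n hn =>
  ⟨hT.some, hT.some_mem, [], List.nil_prefix, by simpa using (QuotientGroup.eq_one_iff n).2 hn⟩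

lemma reflTransGen_letterStep_prefixCosets_of_mem_closure [N.Normal]
    (hT : Subgroup.closure T = N) {n : CoprodI M} (hn : n ∈ Subgroup.closure T) :
    ReflTransGen (LetterStep (prefixCosets N T)) 1 n := by
  induction hn using Subgroup.closure_induction with
  | mem t ht =>
    simpa using reflTransGen_letterStep_ofList (S := prefixCosets N T) 1 (nf t)
      fun q hq => ⟨t, ht, q, hq, by rw [one_mul]⟩
  | one => exact .refl
  | mul x y hx _ hwx hwy =>
    have := reflTransGen_letterStep_mul_left (smul_prefixCosets_subset (hT ▸ hx)) hwy
    rw [mul_one] at this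
    exact hwx.trans this
  | inv x hx hwx =>
    have := reflTransGen_letterStep_mul_left
      (smul_prefixCosets_subset (inv_mem (hT ▸ hx))) hwx
    rw [mul_one, inv_mul_cancel] at this
    exact symm this

lemma reflTransGen_letterStep_prefixCosets [N.Normal] (hT : Subgroup.closure T = N)
    {g : CoprodI M} (hg : g ∈ prefixCosets N T) :
    ReflTransGen (LetterStep (prefixCosets N T)) 1 g := by
  obtain ⟨t, ht, q, hq, hgq⟩ := hg
  have hn : g * (ofList q)⁻¹ ∈ N := by
    simpa [div_eq_mul_inv] using QuotientGroup.eq_iff_div_mem.1 hgq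
  have hprefix := reflTransGen_letterStep_mul_left (smul_prefixCosets_subset hn)
    (reflTransGen_letterStep_ofList (S := prefixCosets N T) 1 q
      fun p hp => ⟨t, ht, p, hp.trans hq, by rw [one_mul]⟩)
  rw [mul_one, one_mul, inv_mul_cancel_right] at hprefix
  exact (reflTransGen_letterStep_prefixCosets_of_mem_closure hT (hT ▸ hn)).trans hprefix

lemma finiteIndex_of_prefixCosets_eq_univ (hT : T.Finite) (h : prefixCosets N T = Set.univ) :
    N.FiniteIndex := by
  have hfin : (Set.univ : Set (CoprodI M ⧸ N)).Finite := by
    refine (hT.biUnion fun t _ => ((nf t).inits.finite_toSet.image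
      fun q => (ofList q : CoprodI M ⧸ N))).subset ?_
    rintro ⟨g⟩ -
    obtain ⟨t, ht, q, hq, hg⟩ := h.symm ▸ Set.mem_univ g
    exact Set.mem_biUnion ht ⟨q, List.mem_inits _ _ |>.2 hq, hg.symm⟩
  have := Set.finite_univ_iff.1 hfin
  exact Subgroup.finiteIndex_of_finite_quotient

end PrefixCosets

end NormalForm

theorem finiteIndex_of_normal_of_fg [Nontrivial ι] [∀ i, Nontrivial (M i)]
    {N : Subgroup (CoprodI M)} (hNn : N.Normal) (hN : N ≠ ⊥) (hfg : N.FG) : N.FiniteIndex := by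
  classical
  obtain ⟨T, hT⟩ := hfg
  have hT₀ : (T : Set (CoprodI M)).Nonempty := by
    rw [Set.nonempty_iff_ne_empty]
    rintro hT'
    rw [hT', Subgroup.closure_empty] at hT
    exact hN hT.symm
  obtain ⟨w, hwN, hw1, hw⟩ := exists_mem_endsInDistinctFactors hN
  exact finiteIndex_of_prefixCosets_eq_univ T.finite_toSet <|
    eq_univ_of_forall_reflTransGen (coe_subset_prefixCosets hT₀)
      (fun _ => reflTransGen_letterStep_prefixCosets hT) hwN hw1 hw

end Monoid.CoprodI

namespace Monoid.Coprod

universe u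

variable {G H : Type u} [Group G] [Group H]

instance : ∀ b, Group (cond b G H)
  | true => ‹Group G›
  | false => ‹Group H›

def mulEquivCoprodI : Coprod G H ≃* CoprodI (fun b => cond b G H) :=
  MonoidHom.toMulEquiv
    (lift (CoprodI.of (M := fun b => cond b G H) (i := true))
      (CoprodI.of (M := fun b => cond b G H) (i := false)))
    (CoprodI.lift fun | true => inl | false => inr)
    (hom_ext (by ext; simp) (by ext; simp))
    (CoprodI.ext_hom _ _ fun | true => by ext; simp | false => by ext; simp)

theorem finiteIndex_of_normal_of_fg [Nontrivial G] [Nontrivial H] {N : Subgroup (Coprod G H)}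
    (hNn : N.Normal) (hN : N ≠ ⊥) (hfg : N.FG) : N.FiniteIndex :=
  have : ∀ b, Nontrivial (cond b G H) := fun | true => ‹_› | false => ‹_›
  hNn.finiteIndex_of_mulEquiv mulEquivCoprodI
    (fun _ => CoprodI.finiteIndex_of_normal_of_fg) hN hfg

end Monoid.Coprod

/-- A nontrivial finitely generated normal subgroup of a free product of two nontrivial
groups has finite index.  Consequently, a finitely generated group possessing a
nontrivial finitely generated normal subgroup with infinite quotient does not split as
a free product of two nontrivial groups. -/
theorem normal_fg_subgroup_of_free_product_finiteIndex :
    (∀ (G₁ G₂ : Type) [Group G₁] [Group G₂], Nontrivial G₁ → Nontrivial G₂ →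
      ∀ N : Subgroup (Monoid.Coprod G₁ G₂), N.Normal → N ≠ ⊥ → N.FG →
        N.FiniteIndex) ∧
    (∀ (G : Type) [Group G], Group.FG G →
      (∃ K : Subgroup G, K.Normal ∧ K ≠ ⊥ ∧ K.FG ∧ Infinite (G ⧸ K)) →
      ∀ (G₁ G₂ : Type) [Group G₁] [Group G₂], Nontrivial G₁ → Nontrivial G₂ →
        IsEmpty (G ≃* Monoid.Coprod G₁ G₂)) := by
  refine ⟨fun G₁ G₂ _ _ _ _ _ => Monoid.Coprod.finiteIndex_of_normal_of_fg, ?_⟩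
  rintro G _ - ⟨K, hKn, hK, hKfg, hKinf⟩ G₁ G₂ _ _ _ _
  refine ⟨fun e => ?_⟩
  have : K.FiniteIndex :=
    hKn.finiteIndex_of_mulEquiv e (fun _ => Monoid.Coprod.finiteIndex_of_normal_of_fg) hK hKfg
  exact not_finite (G ⧸ K)
end

section
/- The Baumslag–Solitar group BS(2,3) is not Hopfian: there exists a surjective group homomorphism BS(2,3) → BS(2,3) that is not injective (for example, the endomorphism determined by a ↦ a² and t ↦ t). -/
namespace BSAux

open HNNExtension Multiplicative

abbrev M := Multiplicative ℤ

def mulBy (k : ℤ) : M →* M where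
  toFun n := ofAdd (k * n.toAdd)
  map_one' := by simp
  map_mul' x y := by simp [mul_add, ofAdd_add]

lemma mulBy_injective {k : ℤ} (hk : k ≠ 0) : Function.Injective (mulBy k) := by
  intro x y h
  have h' : k * x.toAdd = k * y.toAdd := congrArg Multiplicative.toAdd h
  exact Multiplicative.toAdd.injective (mul_left_cancel₀ hk h')

def A : Subgroup M := (⊤ : Subgroup M).map (mulBy 2)
def B : Subgroup M := (⊤ : Subgroup M).map (mulBy 3)

noncomputable def φ : A ≃* B :=
  ((⊤ : Subgroup M).equivMapOfInjective (mulBy 2) (mulBy_injective two_ne_zero)).symm.trans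
    ((⊤ : Subgroup M).equivMapOfInjective (mulBy 3) (mulBy_injective three_ne_zero))

lemma mem_A (z : M) : mulBy 2 z ∈ A := Subgroup.mem_map_of_mem _ (Subgroup.mem_top z)
lemma mem_B (z : M) : mulBy 3 z ∈ B := Subgroup.mem_map_of_mem _ (Subgroup.mem_top z)

lemma φ_coe (z : M) : ((φ ⟨mulBy 2 z, mem_A z⟩ : B) : M) = mulBy 3 z := by
  have h2 : ((((⊤ : Subgroup M).equivMapOfInjective (mulBy 2)
      (mulBy_injective two_ne_zero)).symm ⟨mulBy 2 z, mem_A z⟩ : (⊤ : Subgroup M)) : M) = z := by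
    apply mulBy_injective (two_ne_zero (α := ℤ))
    rw [← Subgroup.coe_equivMapOfInjective_apply ⊤ (mulBy 2) (mulBy_injective two_ne_zero),
      MulEquiv.apply_symm_apply]
  show (((⊤ : Subgroup M).equivMapOfInjective (mulBy 3) (mulBy_injective three_ne_zero)
      ((((⊤ : Subgroup M).equivMapOfInjective (mulBy 2)
        (mulBy_injective two_ne_zero)).symm ⟨mulBy 2 z, mem_A z⟩)) : M)) = mulBy 3 z
  rw [Subgroup.coe_equivMapOfInjective_apply, h2]

lemma mem_A_iff (z : M) : z ∈ A ↔ (2 : ℤ) ∣ z.toAdd := by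
  constructor
  · rintro ⟨y, -, rfl⟩; exact ⟨y.toAdd, rfl⟩
  · rintro ⟨m, hm⟩
    exact ⟨ofAdd m, Subgroup.mem_top _, Multiplicative.toAdd.injective hm.symm⟩

lemma mem_B_iff (z : M) : z ∈ B ↔ (3 : ℤ) ∣ z.toAdd := by
  constructor
  · rintro ⟨y, -, rfl⟩; exact ⟨y.toAdd, rfl⟩
  · rintro ⟨m, hm⟩
    exact ⟨ofAdd m, Subgroup.mem_top _, Multiplicative.toAdd.injective hm.symm⟩

/-- The HNN extension `BS(2,3) = ⟨ℤ, t | t (2ℤ) t⁻¹ = 3ℤ⟩`. -/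
abbrev H : Type := HNNExtension M A B φ

/-- the generator of the base group `ℤ`. -/
def g : M := ofAdd (1 : ℤ)

lemma g_sq : g ^ 2 = mulBy 2 g := by
  apply Multiplicative.toAdd.injective
  simp [g, mulBy]

lemma g_cube : g ^ 3 = mulBy 3 g := by
  apply Multiplicative.toAdd.injective
  simp [g, mulBy]

lemma hnn_rel : (HNNExtension.t : H) * HNNExtension.of (G := M) (A := A) (B := B) (φ := φ) (g ^ 2) * t⁻¹
    = HNNExtension.of (g ^ 3) := by
  rw [g_sq, g_cube]
  rw [← φ_coe g]
  exact (equiv_eq_conj (φ := φ) ⟨mulBy 2 g, mem_A g⟩).symm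

lemma g_notMem_A : g ∉ A := by
  rw [mem_A_iff]; decide
lemma g_notMem_B : g ∉ B := by
  rw [mem_B_iff]; decide
lemma g_inv_notMem_A : g⁻¹ ∉ A := by
  rw [mem_A_iff]; decide

/-- the reduced word `t g t⁻¹ g t g⁻¹ t⁻¹ g⁻¹`. -/
def w : HNNExtension.NormalWord.ReducedWord M A B where
  head := 1
  toList := [(1, g), (-1, g), (1, g⁻¹), (-1, g⁻¹)]
  chain := by
    refine List.isChain_cons_cons.2 ⟨?_, List.isChain_cons_cons.2 ⟨?_, List.isChain_cons_cons.2 ⟨?_,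
      List.isChain_singleton _⟩⟩⟩
    · exact fun h => absurd h g_notMem_A
    · exact fun h => absurd h g_notMem_B
    · exact fun h => absurd h g_inv_notMem_A

lemma w_prod : w.prod φ = (HNNExtension.t : H) * .of g * HNNExtension.t⁻¹ * .of g *
    HNNExtension.t * .of g⁻¹ * HNNExtension.t⁻¹ * .of g⁻¹ := by
  simp only [HNNExtension.NormalWord.ReducedWord.prod, w, List.map_cons, List.map_nil, List.prod_cons, List.prod_nil,
    Units.val_one, Units.val_neg, zpow_one, zpow_neg, map_one, one_mul, mul_one]
  group

lemma w_prod_ne_one : w.prod φ ≠ 1 := by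
  intro h
  have h1 : w.prod φ ∈ (HNNExtension.of.range : Subgroup H) := by
    rw [h]; exact one_mem _
  have := ReducedWord.toList_eq_nil_of_mem_of_range φ w h1
  simp [w] at this

end BSAux

/-- The relator of the Baumslag–Solitar group `BS(2,3) = ⟨a, t ∣ t a² t⁻¹ a⁻³⟩`,
with `a = FreeGroup.of 0` and `t = FreeGroup.of 1`. -/
def bsRels : Set (FreeGroup (Fin 2)) :=
  {FreeGroup.of 1 * FreeGroup.of 0 ^ 2 * (FreeGroup.of 1)⁻¹ * (FreeGroup.of 0 ^ 3)⁻¹}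

/-- The Baumslag–Solitar group `BS(2,3)`. -/
abbrev BS23 : Type := PresentedGroup bsRels

namespace BSAux

/-- the generators of `BS23` -/
def Aa : BS23 := PresentedGroup.of 0
def T : BS23 := PresentedGroup.of 1

lemma bs_rel : T * Aa ^ 2 * T⁻¹ = Aa ^ 3 := by
  have h : PresentedGroup.mk bsRels
      (FreeGroup.of 1 * FreeGroup.of 0 ^ 2 * (FreeGroup.of 1)⁻¹ * (FreeGroup.of 0 ^ 3)⁻¹) = 1 :=
    (QuotientGroup.eq_one_iff _).2 (Subgroup.subset_normalClosure rfl)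
  have h2 : T * Aa ^ 2 * T⁻¹ * (Aa ^ 3)⁻¹ = 1 := by
    simpa [map_mul, map_pow, map_inv, T, Aa, PresentedGroup.of] using h
  calc T * Aa ^ 2 * T⁻¹ = T * Aa ^ 2 * T⁻¹ * (Aa ^ 3)⁻¹ * Aa ^ 3 := by group
  _ = Aa ^ 3 := by rw [h2]; group

/-- the function defining the endomorphism `a ↦ a², t ↦ t`. -/
def ffun : Fin 2 → BS23 := ![Aa ^ 2, T]

lemma ffun_rel : ∀ r ∈ bsRels, FreeGroup.lift ffun r = 1 := by
  rintro r rfl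
  simp only [map_mul, map_pow, map_inv, FreeGroup.lift_apply_of, ffun, Matrix.cons_val_zero,
    Matrix.cons_val_one, Matrix.head_cons]
  calc T * (Aa ^ 2) ^ 2 * T⁻¹ * ((Aa ^ 2) ^ 3)⁻¹
      = (T * Aa ^ 2 * T⁻¹) * (T * Aa ^ 2 * T⁻¹) * ((Aa ^ 2) ^ 3)⁻¹ := by group
    _ = Aa ^ 3 * Aa ^ 3 * ((Aa ^ 2) ^ 3)⁻¹ := by rw [bs_rel]
    _ = 1 := by group

/-- The endomorphism `a ↦ a², t ↦ t` of `BS(2,3)`. -/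
def f : BS23 →* BS23 := PresentedGroup.toGroup ffun_rel

lemma f_Aa : f Aa = Aa ^ 2 := PresentedGroup.toGroup.of ffun_rel
lemma f_T : f T = T := PresentedGroup.toGroup.of ffun_rel

lemma f_surjective : Function.Surjective f := by
  intro x
  have hx : x ∈ f.range := by
    refine PresentedGroup.generated_by bsRels f.range ?_ x
    intro j
    fin_cases j
    · refine ⟨T * Aa * T⁻¹ * Aa⁻¹, ?_⟩
      have : f (T * Aa * T⁻¹ * Aa⁻¹) = T * Aa ^ 2 * T⁻¹ * (Aa ^ 2)⁻¹ := by
        simp only [map_mul, map_inv, f_Aa, f_T]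
      rw [this]
      calc T * Aa ^ 2 * T⁻¹ * (Aa ^ 2)⁻¹ = Aa ^ 3 * (Aa ^ 2)⁻¹ := by rw [bs_rel]
        _ = Aa := by group
    · exact ⟨T, f_T⟩
  exact hx

/-- the kernel element `[t a t⁻¹, a]`. -/
def c : BS23 := T * Aa * T⁻¹ * Aa * T * Aa⁻¹ * T⁻¹ * Aa⁻¹

lemma f_c : f c = 1 := by
  have hc : f c = T * Aa ^ 2 * T⁻¹ * Aa ^ 2 * T * (Aa ^ 2)⁻¹ * T⁻¹ * (Aa ^ 2)⁻¹ := by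
    simp only [c, map_mul, map_inv, f_Aa, f_T]
  rw [hc]
  calc T * Aa ^ 2 * T⁻¹ * Aa ^ 2 * T * (Aa ^ 2)⁻¹ * T⁻¹ * (Aa ^ 2)⁻¹
      = (T * Aa ^ 2 * T⁻¹) * Aa ^ 2 * (T * Aa ^ 2 * T⁻¹)⁻¹ * (Aa ^ 2)⁻¹ := by group
    _ = Aa ^ 3 * Aa ^ 2 * (Aa ^ 3)⁻¹ * (Aa ^ 2)⁻¹ := by rw [bs_rel]
    _ = 1 := by group

/-- the function defining `ψ : BS23 →* H`. -/
noncomputable def ψfun : Fin 2 → H := ![HNNExtension.of g, HNNExtension.t]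

lemma ψfun_rel : ∀ r ∈ bsRels, FreeGroup.lift ψfun r = 1 := by
  rintro r rfl
  simp only [map_mul, map_pow, map_inv, FreeGroup.lift_apply_of, ψfun, Matrix.cons_val_zero,
    Matrix.cons_val_one, Matrix.head_cons]
  have h : (HNNExtension.t : H) * HNNExtension.of (g ^ 2) * HNNExtension.t⁻¹
      = HNNExtension.of (g ^ 3) := hnn_rel
  rw [map_pow, map_pow] at h
  rw [h]; group

/-- the homomorphism `BS23 →* H`. -/
noncomputable def ψ : BS23 →* H := PresentedGroup.toGroup ψfun_rel

lemma ψ_Aa : ψ Aa = HNNExtension.of g := PresentedGroup.toGroup.of ψfun_rel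
lemma ψ_T : ψ T = HNNExtension.t := PresentedGroup.toGroup.of ψfun_rel

lemma ψ_c : ψ c = w.prod φ := by
  rw [w_prod]
  simp only [c, map_mul, map_inv, ψ_Aa, ψ_T, map_inv]

lemma c_ne_one : c ≠ 1 := by
  intro h
  apply w_prod_ne_one
  rw [← ψ_c, h, map_one]

lemma f_not_injective : ¬ Function.Injective f := by
  intro hinj
  have : c = 1 := hinj (by rw [f_c, map_one])
  exact c_ne_one this

end BSAux

/-- `BS(2,3)` is not Hopfian: it admits a surjective, non-injective endomorphism. -/
theorem bs23_not_hopfian :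
    ∃ f : BS23 →* BS23, Function.Surjective f ∧ ¬ Function.Injective f :=
  ⟨BSAux.f, BSAux.f_surjective, BSAux.f_not_injective⟩
end

section
/- The group ℤ[1/6] ⋊_{3/2} ℤ is residually finite: for every element g ≠ 1 of ℤ[1/6] ⋊_{3/2} ℤ there exist a finite group F and a group homomorphism φ : ℤ[1/6] ⋊_{3/2} ℤ → F with φ(g) ≠ 1. -/
/-- The additive group `ℤ[1/6] = {m / 6^k : m ∈ ℤ, k ≥ 0} ⊆ ℚ`. -/
def Zinv6 : AddSubgroup ℚ where
  carrier := {q : ℚ | ∃ (m : ℤ) (k : ℕ), q = m / 6 ^ k}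
  zero_mem' := ⟨0, 0, by norm_num⟩
  add_mem' := by
    rintro a b ⟨m, k, rfl⟩ ⟨m', k', rfl⟩
    refine ⟨m * 6 ^ k' + m' * 6 ^ k, k + k', ?_⟩
    have h1 : ((6 : ℚ)) ^ k ≠ 0 := by positivity
    have h2 : ((6 : ℚ)) ^ k' ≠ 0 := by positivity
    push_cast
    field_simp [pow_add]
    ring
  neg_mem' := by
    rintro a ⟨m, k, rfl⟩
    exact ⟨-m, k, by push_cast; ring⟩

lemma mul_three_halves_mem {q : ℚ} (hq : q ∈ Zinv6) : (3 / 2 : ℚ) * q ∈ Zinv6 := by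
  obtain ⟨m, k, rfl⟩ := hq
  refine ⟨9 * m, k + 1, ?_⟩
  have h6 : ((6 : ℚ)) ≠ 0 := by norm_num
  push_cast
  field_simp
  ring

lemma mul_two_thirds_mem {q : ℚ} (hq : q ∈ Zinv6) : (2 / 3 : ℚ) * q ∈ Zinv6 := by
  obtain ⟨m, k, rfl⟩ := hq
  refine ⟨4 * m, k + 1, ?_⟩
  have h6 : ((6 : ℚ)) ≠ 0 := by norm_num
  push_cast
  field_simp
  ring

/-- Multiplication by `3/2` as an additive automorphism of `ℤ[1/6]`. -/
def threeHalves : Zinv6 ≃+ Zinv6 where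
  toFun q := ⟨(3 / 2 : ℚ) * q, mul_three_halves_mem q.2⟩
  invFun q := ⟨(2 / 3 : ℚ) * q, mul_two_thirds_mem q.2⟩
  left_inv q := by ext; simp; ring_nf
  right_inv q := by ext; simp; ring_nf
  map_add' a b := by ext; simp [mul_add]

/-- The semidirect product `ℤ[1/6] ⋊_{3/2} ℤ`, where the generator `1 ∈ ℤ` acts on
`ℤ[1/6]` by multiplication by `3/2`. -/
abbrev Z16Rtimes : Type :=
  SemidirectProduct (Multiplicative Zinv6) (Multiplicative ℤ)
    (zpowersHom (MulAut (Multiplicative Zinv6)) (AddEquiv.toMultiplicative threeHalves))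

lemma one_mem_Zinv6 : (1 : ℚ) ∈ Zinv6 := ⟨1, 0, by norm_num⟩


/-! An element `(q, n)` with `n ≠ 0` survives in `ZMod (|n| + 1)` through the projection to `ℤ`.
If `n = 0` then `q ≠ 0`; choose a prime `p ∤ 6` that does not divide the numerator of `q`. Then
`ℤ[1/6] ⊆ ℤ_[p]`, and reduction modulo `p` turns multiplication by `3/2` into multiplication by
the unit `3/2` of `ZMod p`. This gives a homomorphism to the finite affine group
`ZMod p ⋊ (ZMod p)ˣ`, and `q` survives in it because it is a `p`-adic unit. -/

open SemidirectProduct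

theorem Function.Semiconj.mulAut_zpow {A B : Type*} [Mul A] [Mul B] {f : A → B}
    {σ : MulAut A} {τ : MulAut B} (h : Function.Semiconj f σ τ) (n : ℤ) :
    Function.Semiconj f ⇑(σ ^ n) ⇑(τ ^ n) := by
  induction n using Int.induction_on with
  | zero => exact Function.Semiconj.id_right
  | succ n ih =>
    rw [zpow_add_one, zpow_add_one, MulAut.coe_mul, MulAut.coe_mul]
    exact ih.comp_right h
  | pred n ih =>
    rw [zpow_sub_one, zpow_sub_one, MulAut.coe_mul, MulAut.coe_mul]
    exact ih.comp_right (h.inverses_right σ.apply_inv_self τ.inv_apply_self)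

/-- The semidirect product `Multiplicative R ⋊ Rˣ` along this action is the affine group of `R`. -/
def Units.mulAutMultiplicative (R : Type*) [Semiring R] : Rˣ →* MulAut (Multiplicative R) where
  toFun u := AddEquiv.toMultiplicative (DistribMulAction.toAddAut Rˣ R u)
  map_one' := by ext x; exact one_smul Rˣ x.toAdd
  map_mul' u v := by ext x; exact mul_smul u v x.toAdd

instance {N G : Type*} [Group N] [Group G] [Finite N] [Finite G] (φ : G →* MulAut N) :
    Finite (N ⋊[φ] G) :=
  Finite.of_equiv _ equivProd.symm

theorem Int.cast_zmod_natAbs_succ_ne_zero {n : ℤ} (hn : n ≠ 0) :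
    (n : ZMod (n.natAbs + 1)) ≠ 0 := by
  rw [Ne, ZMod.intCast_zmod_eq_zero_iff_dvd]
  exact fun h => hn (Int.eq_zero_of_dvd_of_natAbs_lt_natAbs h (by omega))

theorem Int.exists_prime_coprime_not_dvd {m : ℤ} (hm : m ≠ 0) {k : ℕ} (hk : k ≠ 0) :
    ∃ p : ℕ, p.Prime ∧ p.Coprime k ∧ ¬(p : ℤ) ∣ m := by
  obtain ⟨p, hle, hp⟩ := Nat.exists_infinite_primes (m.natAbs + k + 1)
  refine ⟨p, hp, hp.coprime_iff_not_dvd.mpr fun h => ?_, fun h => ?_⟩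
  · have := Nat.le_of_dvd (Nat.pos_of_ne_zero hk) h
    omega
  · exact hm (Int.eq_zero_of_dvd_of_natAbs_lt_natAbs h (by omega))

theorem Padic.one_le_norm_of_not_dvd_num {p : ℕ} [Fact p.Prime] {q : ℚ}
    (h : ¬(p : ℤ) ∣ q.num) : 1 ≤ ‖(q : ℚ_[p])‖ := by
  have hnum : ‖((q.num : ℚ) : ℚ_[p])‖ = 1 := by
    rw [Rat.cast_intCast]
    exact (norm_int_le_one _).antisymm (not_lt.mp (mt norm_intCast_lt_one_iff.mp h))
  have hden : ‖((q.den : ℚ) : ℚ_[p])‖ ≤ 1 := by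
    rw [Rat.cast_natCast]
    exact_mod_cast norm_int_le_one q.den
  calc 1 = ‖((q.num : ℚ) : ℚ_[p])‖ := hnum.symm
    _ = ‖(q : ℚ_[p])‖ * ‖((q.den : ℚ) : ℚ_[p])‖ := by
      rw [← norm_mul, ← Rat.cast_mul, Rat.mul_den_eq_num]
    _ ≤ ‖(q : ℚ_[p])‖ := mul_le_of_le_one_right (norm_nonneg _) hden

namespace Zinv6

variable (p : ℕ) [Fact p.Prime]

theorem norm_le_one (hp : p.Coprime 6) {q : ℚ} (hq : q ∈ Zinv6) : ‖(q : ℚ_[p])‖ ≤ 1 := by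
  obtain ⟨m, k, rfl⟩ := hq
  have h6 : ‖(6 : ℚ_[p])‖ = 1 := by exact_mod_cast Padic.norm_natCast_eq_one_iff.mpr hp
  push_cast
  rw [norm_div, norm_pow, h6, one_pow, div_one]
  exact Padic.norm_int_le_one m

theorem norm_three_halves (hp : p.Coprime 6) : ‖(3 / 2 : ℚ_[p])‖ = 1 := by
  have h2 : ‖(2 : ℚ_[p])‖ = 1 := by
    exact_mod_cast Padic.norm_natCast_eq_one_iff.mpr (hp.coprime_dvd_right (by norm_num))
  have h3 : ‖(3 : ℚ_[p])‖ = 1 := by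
    exact_mod_cast Padic.norm_natCast_eq_one_iff.mpr (hp.coprime_dvd_right (by norm_num))
  rw [norm_div, h2, h3, div_one]

variable (hp : p.Coprime 6)

noncomputable def toPadicInt : Zinv6 →+ ℤ_[p] where
  toFun q := ⟨q, norm_le_one p hp q.2⟩
  map_zero' := Subtype.ext Rat.cast_zero
  map_add' a b := Subtype.ext (Rat.cast_add (a : ℚ) b)

noncomputable def threeHalvesUnit : ℤ_[p]ˣ := PadicInt.mkUnits (norm_three_halves p hp)

theorem toPadicInt_threeHalves (q : Zinv6) :
    toPadicInt p hp (threeHalves q) = threeHalvesUnit p hp * toPadicInt p hp q :=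
  Subtype.ext <| by
    show ((3 / 2 * (q : ℚ) : ℚ) : ℚ_[p]) = 3 / 2 * ((q : ℚ) : ℚ_[p])
    push_cast
    rfl

noncomputable def reduction : Zinv6 →+ ZMod p :=
  PadicInt.toZMod.toAddMonoidHom.comp (toPadicInt p hp)

noncomputable def threeHalvesMod : (ZMod p)ˣ :=
  Units.map PadicInt.toZMod.toMonoidHom (threeHalvesUnit p hp)

theorem reduction_threeHalves (q : Zinv6) :
    reduction p hp (threeHalves q) = threeHalvesMod p hp • reduction p hp q := by
  simp [reduction, threeHalvesMod, toPadicInt_threeHalves, Units.smul_def]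

theorem semiconj_reduction_threeHalves :
    Function.Semiconj (reduction p hp).toMultiplicative (AddEquiv.toMultiplicative threeHalves)
      (Units.mulAutMultiplicative (ZMod p) (threeHalvesMod p hp)) :=
  fun a => congrArg Multiplicative.ofAdd (reduction_threeHalves p hp a.toAdd)

theorem reduction_ne_zero {q : Zinv6} (h : ¬(p : ℤ) ∣ (q : ℚ).num) : reduction p hp q ≠ 0 := by
  intro h0
  have hlt : ‖toPadicInt p hp q‖ < 1 := by
    rw [← PadicInt.mem_nonunits, ← IsLocalRing.mem_maximalIdeal, ← PadicInt.ker_toZMod]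
    exact h0
  exact hlt.not_ge (Padic.one_le_norm_of_not_dvd_num h)

noncomputable def toAffine :
    Z16Rtimes →* Multiplicative (ZMod p) ⋊[Units.mulAutMultiplicative (ZMod p)] (ZMod p)ˣ :=
  SemidirectProduct.map (reduction p hp).toMultiplicative (zpowersHom _ (threeHalvesMod p hp))
    fun n => MonoidHom.ext fun q => by
      simp only [zpowersHom_apply, map_zpow]
      exact (semiconj_reduction_threeHalves p hp).mulAut_zpow n.toAdd q

end Zinv6

/-- `ℤ[1/6] ⋊_{3/2} ℤ` is residually finite: every nontrivial element survives in a
homomorphism to some finite group. -/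
theorem z16_rtimes_residually_finite :
    ∀ g : Z16Rtimes, g ≠ 1 →
      ∃ (F : Type) (_ : Group F) (_ : Finite F) (φ : Z16Rtimes →* F), φ g ≠ 1 := by
  intro g hg
  by_cases hright : g.right = 1
  · have hleft : ((g.left.toAdd : Zinv6) : ℚ).num ≠ 0 := fun h =>
      hg (SemidirectProduct.ext (Subtype.ext (Rat.num_eq_zero.mp h)) hright)
    obtain ⟨p, hp, hp6, hnum⟩ := Int.exists_prime_coprime_not_dvd hleft (by norm_num : 6 ≠ 0)
    have : Fact p.Prime := ⟨hp⟩
    exact ⟨_, _, inferInstance, Zinv6.toAffine p hp6,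
      fun h => Zinv6.reduction_ne_zero p hp6 hnum (congrArg (·.left.toAdd) h)⟩
  · have hn : g.right.toAdd ≠ 0 := hright
    exact ⟨Multiplicative (ZMod (g.right.toAdd.natAbs + 1)), _, inferInstance,
      (Int.castAddHom _).toMultiplicative.comp rightHom,
      fun h => Int.cast_zmod_natAbs_succ_ne_zero hn (congrArg Multiplicative.toAdd h)⟩
end

section
/- There exists a surjective group homomorphism from the Baumslag–Solitar group BS(2,3) onto ℤ[1/6] ⋊_{3/2} ℤ sending the generator a to the element (1, 0) and the generator t to the element (0, 1). -/
/-!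
Conjugating `a = (1, 0)` by `tʲ = (0, j)` gives `((3/2)ʲ, 0)`. Since `9ᵏ` and `4ᵏ` are coprime,
every `m / 6ᵏ` is an integer combination of `(3/2)ᵏ` and `(2/3)ᵏ`, so these conjugates and `t`
generate `ℤ[1/6] ⋊_{3/2} ℤ`; and `t a² t⁻¹ = a³` holds there because `3/2 · 2 = 3`.
-/

open SemidirectProduct Multiplicative

theorem SemidirectProduct.eq_top_of_forall_inl_mem_of_forall_inr_mem {N G : Type*} [Group N]
    [Group G] {φ : G →* MulAut N} {H : Subgroup (N ⋊[φ] G)} (hN : ∀ n, inl n ∈ H)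
    (hG : ∀ g, inr g ∈ H) : H = ⊤ :=
  (Subgroup.eq_top_iff' H).2 fun x => inl_left_mul_inr_right x ▸ mul_mem (hN _) (hG _)

theorem Int.exists_div_mul_pow_eq_add_of_isCoprime {p q : ℤ} (hp : p ≠ 0) (hq : q ≠ 0)
    (hpq : IsCoprime p q) (m : ℤ) (k : ℕ) :
    ∃ a b : ℤ, (m : ℚ) / (p * q) ^ k = a * (p / q) ^ k + b * (q / p) ^ k := by
  obtain ⟨u, v, huv⟩ := hpq.pow (m := 2 * k) (n := 2 * k)
  refine ⟨m * u, m * v, ?_⟩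
  have hP : (p : ℚ) ^ k ≠ 0 := pow_ne_zero _ (by exact_mod_cast hp)
  have hQ : (q : ℚ) ^ k ≠ 0 := pow_ne_zero _ (by exact_mod_cast hq)
  have huv' : (u : ℚ) * (p ^ k) ^ 2 + v * (q ^ k) ^ 2 = 1 := by
    simp only [← pow_mul, mul_comm k]
    exact_mod_cast huv
  rw [div_pow, div_pow, mul_pow]
  field_simp
  push_cast
  linear_combination (-(m : ℚ)) * huv'

theorem Zinv6.exists_eq_mul_zpow_add (x : Zinv6) :
    ∃ a b k : ℤ, (x : ℚ) = a * (3 / 2) ^ k + b * (3 / 2) ^ (-k) := by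
  obtain ⟨m, k, hx⟩ := x.2
  obtain ⟨a, b, hab⟩ := Int.exists_div_mul_pow_eq_add_of_isCoprime (p := 3) (q := 2)
    (by norm_num) (by norm_num) (by norm_num [Int.isCoprime_iff_gcd_eq_one]) m k
  refine ⟨a, b, k, ?_⟩
  rw [hx, zpow_neg, zpow_natCast, ← inv_pow, inv_div]
  push_cast at hab
  norm_num at hab
  exact hab

theorem toAdd_toMultiplicative_threeHalves_zpow_apply (j : ℤ) (x : Zinv6) :
    (((AddEquiv.toMultiplicative threeHalves ^ j) (ofAdd x)).toAdd : ℚ) = (3 / 2) ^ j * x := by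
  induction j using Int.induction_on generalizing x with
  | zero => simp
  | succ n ih =>
    rw [zpow_add_one, MulAut.mul_apply, zpow_add_one₀ (by norm_num), mul_assoc]
    exact ih (threeHalves x)
  | pred n ih =>
    rw [zpow_sub_one, MulAut.mul_apply, zpow_sub_one₀ (by norm_num), mul_assoc, inv_div]
    exact ih (threeHalves.symm x)

def bs23Gens : Fin 2 → Z16Rtimes :=
  ![inl (ofAdd ⟨1, one_mem_Zinv6⟩), inr (ofAdd 1)]

theorem lift_bs23Gens_eq_one : ∀ r ∈ bsRels, FreeGroup.lift bs23Gens r = 1 := by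
  rintro r rfl
  set a : Multiplicative Zinv6 := ofAdd ⟨1, one_mem_Zinv6⟩
  set t : Multiplicative ℤ := ofAdd 1
  have h : AddEquiv.toMultiplicative threeHalves (a ^ 2) = a ^ 3 := by
    apply toAdd.injective
    ext
    change (3 / 2 : ℚ) * (2 • 1) = 3 • 1
    norm_num
  have hconj : inr t * inl (a ^ 2) * inr t⁻¹ = (inl (a ^ 3) : Z16Rtimes) := by
    rw [← inl_aut, zpowersHom_apply, toAdd_ofAdd, zpow_one, h]
  rw [map_pow, map_pow] at hconj
  simp only [map_mul, map_pow, map_inv, FreeGroup.lift_apply_of]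
  change inr t * inl a ^ 2 * (inr t)⁻¹ * (inl a ^ 3)⁻¹ = 1
  rw [mul_inv_eq_one, ← map_inv, hconj]

theorem Z16Rtimes.eq_top_of_inl_one_mem_of_inr_one_mem {H : Subgroup Z16Rtimes}
    (ha : inl (ofAdd ⟨1, one_mem_Zinv6⟩) ∈ H) (ht : inr (ofAdd 1) ∈ H) : H = ⊤ := by
  have hinr (n : Multiplicative ℤ) : inr n ∈ H := by
    simpa [← map_zpow, ← ofAdd_zsmul] using zpow_mem ht n.toAdd
  let y (j : ℤ) : Zinv6 :=
    ((AddEquiv.toMultiplicative threeHalves ^ j) (ofAdd ⟨1, one_mem_Zinv6⟩)).toAdd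
  have hy (j : ℤ) : inl (ofAdd (y j)) ∈ H := by
    rw [show inl (ofAdd (y j)) = inr (ofAdd j) * inl (ofAdd ⟨1, one_mem_Zinv6⟩) * inr (ofAdd j)⁻¹
      from inl_aut _ _]
    exact mul_mem (mul_mem (hinr _) ha) (hinr _)
  refine SemidirectProduct.eq_top_of_forall_inl_mem_of_forall_inr_mem (fun x => ?_) hinr
  obtain ⟨a, b, k, hx⟩ := Zinv6.exists_eq_mul_zpow_add x.toAdd
  have hx' : x = ofAdd (y k) ^ a * ofAdd (y (-k)) ^ b := by
    apply toAdd.injective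
    ext
    simp only [toAdd_mul, toAdd_zpow, toAdd_ofAdd, AddSubgroup.coe_add, AddSubgroup.coe_zsmul,
      zsmul_eq_mul, y, toAdd_toMultiplicative_threeHalves_zpow_apply, hx]
    ring
  rw [hx', map_mul, map_zpow, map_zpow]
  exact mul_mem (zpow_mem (hy k) a) (zpow_mem (hy (-k)) b)

/-- There is a surjection `BS(2,3) ↠ ℤ[1/6] ⋊_{3/2} ℤ` sending `a ↦ (1, 0)` and
`t ↦ (0, 1)`. -/
theorem bs23_surjects_onto_z16_rtimes :
    ∃ f : BS23 →* Z16Rtimes,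
      Function.Surjective f ∧
      f (PresentedGroup.of 0)
        = SemidirectProduct.inl (Multiplicative.ofAdd (⟨1, one_mem_Zinv6⟩ : Zinv6)) ∧
      f (PresentedGroup.of 1)
        = SemidirectProduct.inr (Multiplicative.ofAdd (1 : ℤ)) := by
  let f : BS23 →* Z16Rtimes := PresentedGroup.toGroup lift_bs23Gens_eq_one
  have ha : f (PresentedGroup.of 0) = inl (ofAdd ⟨1, one_mem_Zinv6⟩) :=
    PresentedGroup.toGroup.of _
  have ht : f (PresentedGroup.of 1) = inr (ofAdd 1) := PresentedGroup.toGroup.of _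
  refine ⟨f, MonoidHom.range_eq_top.1 ?_, ha, ht⟩
  exact Z16Rtimes.eq_top_of_inl_one_mem_of_inr_one_mem ⟨_, ha⟩ ⟨_, ht⟩
end

section
/- The Baumslag–Solitar group BS(2,3) and the group ℤ[1/6] ⋊_{3/2} ℤ have the same finite quotients: for every finite group F, there exists a surjective group homomorphism BS(2,3) → F if and only if there exists a surjective group homomorphism ℤ[1/6] ⋊_{3/2} ℤ → F. -/
/-!
In a finite group, `t a² t⁻¹ = a³` forces `ord(a²) = ord(a³)`, so the order `n` of `a` is
prime to `6`. Then `1 ↦ a` extends to `ℤ[1/6] → ℤ/n ≅ ⟨a⟩` (reduction mod `n`), on which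
conjugation by `t` acts as multiplication by `3/2`: every finite quotient of `BS(2,3)` factors
through the natural map `BS(2,3) → ℤ[1/6] ⋊ ℤ`. Conversely, in a finite quotient of
`ℤ[1/6] ⋊ ℤ` the image of `6^-(k+1)` satisfies the same relation, so its order is prime to `6`
and it is a power of its sixth power, the image of `6^-k`; hence the natural map stays
surjective in every finite quotient.
-/

theorem coprime_mul_orderOf_of_conj_pow_eq_pow {G : Type*} [Group G] {a t : G}
    (ha : IsOfFinOrder a) {m k : ℕ} (hmk : m.Coprime k) (h : t * a ^ m * t⁻¹ = a ^ k) :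
    (m * k).Coprime (orderOf a) := by
  set n := orderOf a
  have hord : n / n.gcd m = n / n.gcd k := by
    rw [← ha.orderOf_pow, ← ha.orderOf_pow, ← h, ← MulAut.conj_apply, MulEquiv.orderOf_eq]
  have hgcd : n.gcd m = n.gcd k := by
    rw [← Nat.div_div_self (Nat.gcd_dvd_left n m) ha.orderOf_pos.ne', hord,
      Nat.div_div_self (Nat.gcd_dvd_left n k) ha.orderOf_pos.ne']
  have hm : n.gcd m = 1 :=
    Nat.dvd_one.1 (hmk ▸ Nat.dvd_gcd (Nat.gcd_dvd_right n m) (hgcd ▸ Nat.gcd_dvd_right n k))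
  exact (Nat.coprime_comm.1 hm).mul_left (Nat.coprime_comm.1 (hgcd ▸ hm : n.gcd k = 1))

lemma Function.Semiconj.mulAut_zpow_s14 {M N : Type*} [Group M] [Group N] {ψ : M →* N}
    {θ : MulAut M} {σ : MulAut N} (h : Function.Semiconj ψ θ σ) (z : ℤ) :
    Function.Semiconj ψ ⇑(θ ^ z) ⇑(σ ^ z) := by
  have hinv : Function.Semiconj ψ ⇑θ⁻¹ ⇑σ⁻¹ := fun x ↦ by
    rw [MulAut.inv_apply, MulAut.inv_apply, MulEquiv.eq_symm_apply, ← h,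
      MulEquiv.apply_symm_apply]
  induction z using Int.induction_on with
  | zero => exact fun x ↦ rfl
  | succ k ih => rw [zpow_add_one, zpow_add_one]; exact ih.comp_right h
  | pred k ih => rw [zpow_sub_one, zpow_sub_one]; exact ih.comp_right hinv

/-- Only meaningful when `q.den` is prime to `n`: otherwise `ZMod`'s inverse is a junk value. -/
def ratToZMod (n : ℕ) (q : ℚ) : ZMod n := q.num * (q.den : ZMod n)⁻¹

section ratToZMod

variable {n : ℕ}

@[simp]
lemma ratToZMod_one : ratToZMod n 1 = 1 := by simp [ratToZMod]

lemma ratToZMod_mul_natCast {q : ℚ} (hq : q.den.Coprime n) {d : ℕ} {m : ℤ}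
    (h : q * d = m) : ratToZMod n q * d = m := by
  have hnum : q.num * d = m * q.den := by
    have : (q.num : ℚ) * d = m * q.den := by rw [← Rat.mul_den_eq_num, ← h]; ring
    exact_mod_cast this
  calc ratToZMod n q * d = (q.num * d : ℤ) * (q.den : ZMod n)⁻¹ := by
        simp only [ratToZMod]; push_cast; ring
    _ = m * ((q.den : ZMod n) * (q.den : ZMod n)⁻¹) := by rw [hnum]; push_cast; ring
    _ = m := by rw [ZMod.coe_mul_inv_eq_one _ hq, mul_one]

lemma ratToZMod_add {q r : ℚ} (hq : q.den.Coprime n) (hr : r.den.Coprime n) :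
    ratToZMod n (q + r) = ratToZMod n q + ratToZMod n r := by
  have hd : (q.den * r.den).Coprime n := hq.mul_left hr
  have hsum := ratToZMod_mul_natCast (Nat.Coprime.coprime_dvd_left (Rat.add_den_dvd q r) hd)
    (d := q.den * r.den) (m := q.num * r.den + r.num * q.den) (by
      push_cast
      rw [← Rat.mul_den_eq_num q, ← Rat.mul_den_eq_num r]
      ring)
  have hq' := ratToZMod_mul_natCast hq (Rat.mul_den_eq_num q)
  have hr' := ratToZMod_mul_natCast hr (Rat.mul_den_eq_num r)
  refine ((ZMod.isUnit_iff_coprime _ n).2 hd).mul_right_cancel ?_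
  rw [hsum]
  push_cast
  rw [← hq', ← hr']
  ring

end ratToZMod

lemma den_coprime_of_mem_Zinv6 {n : ℕ} (hn : Nat.Coprime 6 n) {q : ℚ} (hq : q ∈ Zinv6) :
    q.den.Coprime n := by
  obtain ⟨m, k, rfl⟩ := hq
  have hden : ((m : ℚ) / 6 ^ k).den ∣ 6 ^ k := by
    simpa [div_eq_mul_inv, Rat.inv_natCast_den] using
      Rat.mul_den_dvd (m : ℚ) ((6 ^ k : ℕ) : ℚ)⁻¹
  exact Nat.Coprime.coprime_dvd_left hden (hn.pow_left k)

lemma half_mem_Zinv6 {q : ℚ} (hq : q ∈ Zinv6) : q / 2 ∈ Zinv6 := by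
  obtain ⟨m, k, rfl⟩ := hq
  exact ⟨3 * m, k + 1, by push_cast; field_simp; ring⟩

lemma inv_six_pow_mem_Zinv6 (k : ℕ) : ((6 : ℚ) ^ k)⁻¹ ∈ Zinv6 := ⟨1, k, by simp⟩

def Zinv6.toZMod {n : ℕ} (hn : Nat.Coprime 6 n) : Zinv6 →+ ZMod n :=
  AddMonoidHom.mk' (fun q ↦ ratToZMod n q) fun q r ↦
    ratToZMod_add (den_coprime_of_mem_Zinv6 hn q.2) (den_coprime_of_mem_Zinv6 hn r.2)

section HomsFromZinv6

variable {G : Type*} [Group G]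

lemma exists_hom_Zinv6_range_le_zpowers {x : G} (hx : Nat.Coprime 6 (orderOf x)) :
    ∃ ψ : Multiplicative Zinv6 →* G,
      ψ (.ofAdd ⟨1, one_mem_Zinv6⟩) = x ∧ ψ.range ≤ Subgroup.zpowers x := by
  let χ : ZMod (orderOf x) →+ Additive G :=
    ZMod.lift _ ⟨zmultiplesHom _ (Additive.ofMul x), by simp [← ofMul_pow]⟩
  have hχ (k : ℤ) : χ k = Additive.ofMul (x ^ k) := by simp [χ, ZMod.lift_coe, ← ofMul_zpow]
  refine ⟨AddMonoidHom.toMultiplicativeLeft (χ.comp (Zinv6.toZMod hx)), ?_, ?_⟩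
  · simpa [Zinv6.toZMod] using congrArg Additive.toMul (hχ 1)
  · rintro _ ⟨q, rfl⟩
    obtain ⟨k, hk⟩ := ZMod.intCast_surjective (Zinv6.toZMod hx q.toAdd)
    exact ⟨k, by simp [← hk, hχ]⟩

lemma map_threeHalves_of_range_le_zpowers {x t : G} (h : t * x ^ 2 * t⁻¹ = x ^ 3)
    {ψ : Multiplicative Zinv6 →* G} (hψ : ψ.range ≤ Subgroup.zpowers x)
    (q : Multiplicative Zinv6) :
    ψ (AddEquiv.toMultiplicative threeHalves q) = t * ψ q * t⁻¹ := by
  -- With `q = 2r`, `threeHalves q = 3r` and `ψ r = x^v`: conjugation by `t` sends `(x²)^v`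
  -- to `(x³)^v`.
  set r : Multiplicative Zinv6 := .ofAdd ⟨q.toAdd / 2, half_mem_Zinv6 q.toAdd.2⟩
  have hq : q = r ^ 2 := by
    apply Multiplicative.toAdd.injective; ext; simp [r]; ring
  have hθq : AddEquiv.toMultiplicative threeHalves q = r ^ 3 := by
    apply Multiplicative.toAdd.injective; ext; simp [r, threeHalves]; ring
  obtain ⟨v, hv⟩ := Subgroup.mem_zpowers_iff.1 (hψ ⟨r, rfl⟩)
  have hpow (n : ℕ) : ψ r ^ n = (x ^ n) ^ v := by
    rw [← hv, ← zpow_natCast, ← zpow_mul, ← zpow_natCast x, ← zpow_mul, mul_comm]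
  rw [hθq, hq, map_pow, map_pow, hpow, hpow, ← h, conj_zpow]

end HomsFromZinv6

namespace BS23

abbrev a : BS23 := PresentedGroup.of 0

abbrev t : BS23 := PresentedGroup.of 1

lemma t_mul_a_sq_mul_t_inv : t * a ^ 2 * t⁻¹ = a ^ 3 :=
  mul_inv_eq_one.1 <| (QuotientGroup.eq_one_iff _).2 <|
    Subgroup.subset_normalClosure (Set.mem_singleton _)

variable {G : Type*} [Group G]

def lift {x y : G} (h : y * x ^ 2 * y⁻¹ = x ^ 3) : BS23 →* G :=
  PresentedGroup.toGroup (f := ![x, y]) <| by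
    rintro _ rfl
    simpa [mul_inv_eq_one] using h

@[simp]
lemma lift_a {x y : G} (h : y * x ^ 2 * y⁻¹ = x ^ 3) : lift h a = x :=
  PresentedGroup.toGroup.of _

@[simp]
lemma lift_t {x y : G} (h : y * x ^ 2 * y⁻¹ = x ^ 3) : lift h t = y :=
  PresentedGroup.toGroup.of _

lemma hom_ext {f g : BS23 →* G} (ha : f a = g a) (ht : f t = g t) : f = g :=
  PresentedGroup.ext <| Fin.forall_fin_two.2 ⟨ha, ht⟩

end BS23

namespace Z16Rtimes

open SemidirectProduct

def a : Z16Rtimes := inl (.ofAdd ⟨1, one_mem_Zinv6⟩)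

def t : Z16Rtimes := inr (.ofAdd 1)

lemma t_mul_inl_sq_mul_t_inv (r : Multiplicative Zinv6) : t * inl r ^ 2 * t⁻¹ = inl r ^ 3 := by
  have hθ : AddEquiv.toMultiplicative threeHalves (r ^ 2) = r ^ 3 := by
    apply Multiplicative.toAdd.injective; ext; simp [threeHalves]; ring
  rw [t, ← map_pow, ← map_inv, ← inl_aut, ← map_pow, ← hθ]
  rfl

lemma t_mul_a_sq_mul_t_inv : t * a ^ 2 * t⁻¹ = a ^ 3 := t_mul_inl_sq_mul_t_inv _

lemma exists_hom_eq_of_coprime_orderOf {G : Type*} [Group G] {x y : G}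
    (hx : Nat.Coprime 6 (orderOf x)) (h : y * x ^ 2 * y⁻¹ = x ^ 3) :
    ∃ L : Z16Rtimes →* G, L a = x ∧ L t = y := by
  obtain ⟨ψ, hψx, hψ⟩ := exists_hom_Zinv6_range_le_zpowers hx
  have hsemiconj :
      Function.Semiconj ψ (AddEquiv.toMultiplicative threeHalves) (MulAut.conj y) :=
    map_threeHalves_of_range_le_zpowers h hψ
  refine ⟨lift ψ (zpowersHom G y) fun g ↦ ?_, by simpa [a] using hψx, by simp [t]⟩
  ext q
  simpa [map_zpow] using hsemiconj.mulAut_zpow_s14 g.toAdd (.ofAdd q)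

def ofBS23 : BS23 →* Z16Rtimes := BS23.lift t_mul_a_sq_mul_t_inv

@[simp]
lemma ofBS23_a : ofBS23 BS23.a = a := BS23.lift_a _

@[simp]
lemma ofBS23_t : ofBS23 BS23.t = t := BS23.lift_t _

variable {F : Type*} [Group F] [Finite F]

lemma exists_comp_ofBS23_eq (f : BS23 →* F) : ∃ L : Z16Rtimes →* F, L.comp ofBS23 = f := by
  have hrel : f BS23.t * f BS23.a ^ 2 * (f BS23.t)⁻¹ = f BS23.a ^ 3 := by
    simpa using congrArg f BS23.t_mul_a_sq_mul_t_inv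
  have hcop : Nat.Coprime 6 (orderOf (f BS23.a)) :=
    coprime_mul_orderOf_of_conj_pow_eq_pow (isOfFinOrder_of_finite _) (by norm_num) hrel
  obtain ⟨L, hLa, hLt⟩ := exists_hom_eq_of_coprime_orderOf hcop hrel
  exact ⟨L, BS23.hom_ext (by simpa using hLa) (by simpa using hLt)⟩

lemma map_inl_mem_zpowers (f : Z16Rtimes →* F) (q : Multiplicative Zinv6) :
    f (inl q) ∈ Subgroup.zpowers (f a) := by
  let s (k : ℕ) : Multiplicative Zinv6 := .ofAdd ⟨((6 : ℚ) ^ k)⁻¹, inv_six_pow_mem_Zinv6 k⟩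
  have hs (k : ℕ) : f (inl (s k)) ∈ Subgroup.zpowers (f a) := by
    induction k with
    | zero => exact ⟨1, by simp [a, s]⟩
    | succ k ih =>
      set b := f (inl (s (k + 1)))
      have hb : b ^ 6 = f (inl (s k)) := by
        rw [← map_pow, ← map_pow]
        congr 2
        apply Multiplicative.toAdd.injective; ext; simp [s, pow_succ]; ring
      -- `b` satisfies the Baumslag–Solitar relation, hence is a power of `b ^ 6`.
      have hcop : Nat.Coprime 6 (orderOf b) :=
        coprime_mul_orderOf_of_conj_pow_eq_pow (m := 2) (k := 3) (isOfFinOrder_of_finite _)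
          (by norm_num) (by simpa using congrArg f (t_mul_inl_sq_mul_t_inv (s (k + 1))))
      exact Subgroup.zpowers_le.2 (hb ▸ ih) (mem_zpowers_pow_iff.2 hcop)
  obtain ⟨m, k, hq⟩ := q.toAdd.2
  have hqs : q = s k ^ m := by
    apply Multiplicative.toAdd.injective; ext; simp [s, hq, div_eq_mul_inv]
  rw [hqs, map_zpow, map_zpow]
  exact zpow_mem (hs k) m

lemma range_comp_ofBS23 (f : Z16Rtimes →* F) : (f.comp ofBS23).range = f.range := by
  refine le_antisymm (fun _ ⟨x, hx⟩ ↦ ⟨ofBS23 x, hx⟩) ?_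
  have ha : f a ∈ (f.comp ofBS23).range := ⟨BS23.a, by simp⟩
  have ht : f t ∈ (f.comp ofBS23).range := ⟨BS23.t, by simp⟩
  rintro _ ⟨x, rfl⟩
  rw [← inl_left_mul_inr_right x, map_mul]
  refine mul_mem (Subgroup.zpowers_le.2 ha (map_inl_mem_zpowers f _)) ?_
  have hx : x.right = .ofAdd 1 ^ x.right.toAdd := by
    rw [← ofAdd_zsmul, smul_eq_mul, mul_one, ofAdd_toAdd]
  rw [hx, map_zpow, map_zpow, ← t]
  exact zpow_mem ht _

end Z16Rtimes

/-- `BS(2,3)` and `ℤ[1/6] ⋊_{3/2} ℤ` have the same finite quotients. -/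
theorem bs23_z16_rtimes_same_finite_quotients :
    ∀ (F : Type) [Group F] [Finite F],
      (∃ f : BS23 →* F, Function.Surjective f) ↔
      (∃ f : Z16Rtimes →* F, Function.Surjective f) := by
  intro F _ _
  constructor
  · rintro ⟨f, hf⟩
    obtain ⟨L, rfl⟩ := Z16Rtimes.exists_comp_ofBS23_eq f
    exact ⟨L, .of_comp (g := Z16Rtimes.ofBS23) hf⟩
  · rintro ⟨f, hf⟩
    refine ⟨f.comp Z16Rtimes.ofBS23, ?_⟩
    rwa [← MonoidHom.range_eq_top, Z16Rtimes.range_comp_ofBS23, MonoidHom.range_eq_top]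
end
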